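/- arXiv:0704.1257 — 3 statements merged into one kernel-verified Lean document; each statement's English description precedes it below -/
import Mathlib

section
/- In the homogenized Weyl algebra hA, every element f can be uniquely represented as a finite F-linear combination of monomials X_0^{i_0} X_1^{i_1}...X_n^{i_n} D_1^{j_1}...D_n^{j_n}. -/
/-- Generators of the homogenized Weyl algebra: `X0`, `X i`, `D i`. -/
inductive HGen (n : ℕ) : Type
  | X0 : HGen n
  | X : Fin n → HGen n
  | D : Fin n → HGen n

/-- Defining relations of the homogenized Weyl algebra `hA`:
all `X`'s commute, all `D`'s commute, `D_v X_v - X_v D_v = X_0^2`,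
`X_v D_w = D_w X_v` for `v ≠ w`, and `X_0` is central. -/
inductive HRel (F : Type) [Field F] (n : ℕ) :
    FreeAlgebra F (HGen n) → FreeAlgebra F (HGen n) → Prop
  | xx (v w : Fin n) : HRel F n
      (FreeAlgebra.ι F (HGen.X v) * FreeAlgebra.ι F (HGen.X w))
      (FreeAlgebra.ι F (HGen.X w) * FreeAlgebra.ι F (HGen.X v))
  | dd (v w : Fin n) : HRel F n
      (FreeAlgebra.ι F (HGen.D v) * FreeAlgebra.ι F (HGen.D w))
      (FreeAlgebra.ι F (HGen.D w) * FreeAlgebra.ι F (HGen.D v))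
  | dx (v : Fin n) : HRel F n
      (FreeAlgebra.ι F (HGen.D v) * FreeAlgebra.ι F (HGen.X v))
      (FreeAlgebra.ι F (HGen.X v) * FreeAlgebra.ι F (HGen.D v) +
        FreeAlgebra.ι F (HGen.X0 : HGen n) * FreeAlgebra.ι F (HGen.X0 : HGen n))
  | xd (v w : Fin n) (h : v ≠ w) : HRel F n
      (FreeAlgebra.ι F (HGen.X v) * FreeAlgebra.ι F (HGen.D w))
      (FreeAlgebra.ι F (HGen.D w) * FreeAlgebra.ι F (HGen.X v))
  | x0x (v : Fin n) : HRel F n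
      (FreeAlgebra.ι F (HGen.X0 : HGen n) * FreeAlgebra.ι F (HGen.X v))
      (FreeAlgebra.ι F (HGen.X v) * FreeAlgebra.ι F (HGen.X0 : HGen n))
  | x0d (v : Fin n) : HRel F n
      (FreeAlgebra.ι F (HGen.X0 : HGen n) * FreeAlgebra.ι F (HGen.D v))
      (FreeAlgebra.ι F (HGen.D v) * FreeAlgebra.ι F (HGen.X0 : HGen n))

/-- The homogenized Weyl algebra `hA = F[X_0,X_1,…,X_n,D_1,…,D_n]`. -/
abbrev HWeyl (F : Type) [Field F] (n : ℕ) := RingQuot (HRel F n)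

noncomputable def hX0 (F : Type) [Field F] (n : ℕ) : HWeyl F n :=
  RingQuot.mkAlgHom F (HRel F n) (FreeAlgebra.ι F (HGen.X0 : HGen n))

noncomputable def hXv (F : Type) [Field F] (n : ℕ) (i : Fin n) : HWeyl F n :=
  RingQuot.mkAlgHom F (HRel F n) (FreeAlgebra.ι F (HGen.X i))

noncomputable def hDv (F : Type) [Field F] (n : ℕ) (i : Fin n) : HWeyl F n :=
  RingQuot.mkAlgHom F (HRel F n) (FreeAlgebra.ι F (HGen.D i))

/-- The monomial `X_0^{i_0} X_1^{i_1} ⋯ X_n^{i_n} D_1^{j_1} ⋯ D_n^{j_n}` in `hA`. -/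
noncomputable def hMon (F : Type) [Field F] (n : ℕ) (i0 : ℕ) (i j : Fin n → ℕ) :
    HWeyl F n :=
  hX0 F n ^ i0 * (List.ofFn fun k => hXv F n k ^ i k).prod *
    (List.ofFn fun k => hDv F n k ^ j k).prod

/-!
The span of the ordered monomials contains `1` and is stable under left multiplication by every
generator: `X_0` and `X_v` only raise an exponent, while `D_v` moves past `X^i` at the cost of the
extra term `i_v X_0^2 X^(i - e_v)`, because `[D_v, X_v] = X_0^2`. Hence the monomials span `hA`.

For independence, let `hA` act on the commutative polynomial ring in the generators, with `X_0`
and `X_v` acting by multiplication and `D_v` by `X_0^2 ∂/∂X_v + D_v ·`. Applied to `1`, the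
ordered monomial `X_0^a X^i D^j` gives the commutative monomial with the same exponents, and
distinct commutative monomials are linearly independent.
-/

section Products

variable {M : Type*} [Monoid M]

theorem mul_prod_ofFn_pow {m : ℕ} (f : Fin m → M) (hf : ∀ k l, Commute (f k) (f l))
    (i : Fin m → ℕ) (v : Fin m) :
    f v * (List.ofFn fun k => f k ^ i k).prod
      = (List.ofFn fun k => f k ^ (i + Pi.single v 1 : Fin m → ℕ) k).prod := by
  induction m with
  | zero => exact v.elim0
  | succ m ih =>
    simp only [List.ofFn_succ, List.prod_cons]
    obtain rfl | ⟨w, rfl⟩ := v.eq_zero_or_eq_succ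
    · simp [← mul_assoc, ← pow_succ', Fin.succ_ne_zero]
    · rw [← mul_assoc, ((hf _ _).pow_right _).eq, mul_assoc,
        ih (fun k => f k.succ) (fun k l => hf _ _) (fun k => i k.succ) w]
      simp [Pi.single_apply, (Fin.succ_ne_zero w).symm]

variable {A : Type*} [Semiring A]

theorem mul_pow_of_mul_eq_add {g a c : A} (hg : g * a = a * g + c) (hc : Commute c a)
    (m : ℕ) : g * a ^ m = a ^ m * g + m • (c * a ^ (m - 1)) := by
  induction m with
  | zero => simp
  | succ m ih =>
    rw [pow_succ', ← mul_assoc, hg, add_mul, mul_assoc, ih, mul_add, ← mul_assoc, ← pow_succ']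
    cases m with
    | zero => simp
    | succ m =>
      rw [mul_smul_comm, ← mul_assoc, ← hc.eq, mul_assoc, ← pow_succ']
      simp only [Nat.add_sub_cancel, succ_nsmul]
      abel

theorem mul_prod_ofFn_pow_of_mul_eq_add {m : ℕ} (f : Fin m → A)
    (hf : ∀ k l, Commute (f k) (f l)) {g c : A} (v : Fin m) (hgv : g * f v = f v * g + c)
    (hg : ∀ k, k ≠ v → Commute g (f k)) (hc : ∀ k, Commute c (f k)) (i : Fin m → ℕ) :
    g * (List.ofFn fun k => f k ^ i k).prod
      = (List.ofFn fun k => f k ^ i k).prod * g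
        + i v • (c * (List.ofFn fun k => f k ^ (i - Pi.single v 1 : Fin m → ℕ) k).prod) := by
  induction m with
  | zero => exact v.elim0
  | succ m ih =>
    simp only [List.ofFn_succ, List.prod_cons]
    obtain rfl | ⟨w, rfl⟩ := v.eq_zero_or_eq_succ
    · have hg_tail : Commute g (List.ofFn fun k : Fin m => f k.succ ^ i k.succ).prod :=
        Commute.list_prod_right _ _ fun y hy => by
          obtain ⟨k, rfl⟩ := List.mem_ofFn.mp hy
          exact (hg k.succ (Fin.succ_ne_zero k)).pow_right _
      rw [← mul_assoc, mul_pow_of_mul_eq_add hgv (hc 0), add_mul, mul_assoc, hg_tail.eq]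
      simp [Fin.succ_ne_zero, mul_assoc]
    · rw [← mul_assoc, ((hg 0 (Fin.succ_ne_zero w).symm).pow_right _).eq, mul_assoc,
        ih (fun k => f k.succ) (fun k l => hf _ _) w hgv
          (fun k hk => hg k.succ (by simpa using hk)) (fun k => hc _) (fun k => i k.succ),
        mul_add, ← mul_assoc, mul_smul_comm, ← mul_assoc, ← ((hc 0).pow_right _).eq]
      simp [Pi.single_apply, (Fin.succ_ne_zero w).symm, mul_assoc]

end Products

theorem MvPolynomial.pderiv_pderiv_comm {σ R : Type*} [CommRing R] [DecidableEq σ]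
    (i j : σ) (p : MvPolynomial σ R) : pderiv i (pderiv j p) = pderiv j (pderiv i p) := by
  suffices ⁅pderiv i, pderiv j⁆ = (0 : Derivation R (MvPolynomial σ R) (MvPolynomial σ R)) by
    rw [← sub_eq_zero, ← Derivation.commutator_apply, this, Derivation.zero_apply]
  refine MvPolynomial.derivation_ext fun k => ?_
  simp [Derivation.commutator_apply, pderiv_X, Pi.single_apply, apply_ite]

theorem LinearMap.prod_ofFn_pow_apply_of_apply_eq_mul {R A : Type*} [CommSemiring R]
    [Semiring A] [Module R A] {m : ℕ} (T : Fin m → Module.End R A) (a : Fin m → A)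
    (S : Subsemiring A) (ha : ∀ k, a k ∈ S) (hT : ∀ k, ∀ q ∈ S, T k q = a k * q)
    (j : Fin m → ℕ) {q : A} (hq : q ∈ S) :
    (List.ofFn fun k => T k ^ j k).prod q = (List.ofFn fun k => a k ^ j k).prod * q := by
  induction m generalizing q with
  | zero => simp
  | succ m ih =>
    have hpow : ∀ e, ∀ q ∈ S, (T 0 ^ e) q = a 0 ^ e * q := by
      intro e
      induction e with
      | zero => simp
      | succ e ih =>
        intro q hq
        rw [pow_succ, Module.End.mul_apply, hT 0 q hq, ih _ (S.mul_mem (ha 0) hq), pow_succ,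
          mul_assoc]
    simp only [List.ofFn_succ, List.prod_cons, Module.End.mul_apply]
    rw [ih (fun k => T k.succ) (fun k => a k.succ) (fun k => ha _) (fun k => hT _)
      (fun k => j k.succ) hq, hpow (j 0) _ (S.mul_mem (S.list_prod_mem ?_) hq), mul_assoc]
    simp only [List.mem_ofFn, forall_exists_index]
    rintro _ k rfl
    exact S.pow_mem (ha _) _

open MvPolynomial

namespace HWeyl

variable {F : Type} [Field F] {n : ℕ}

theorem commute_hXv (v w : Fin n) : Commute (hXv F n v) (hXv F n w) := by
  simpa only [commute_iff_eq, hX0, hXv, hDv, map_mul] using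
    RingQuot.mkAlgHom_rel F (HRel.xx (F := F) v w)

theorem commute_hDv (v w : Fin n) : Commute (hDv F n v) (hDv F n w) := by
  simpa only [commute_iff_eq, hX0, hXv, hDv, map_mul] using
    RingQuot.mkAlgHom_rel F (HRel.dd (F := F) v w)

theorem commute_hX0_hXv (v : Fin n) : Commute (hX0 F n) (hXv F n v) := by
  simpa only [commute_iff_eq, hX0, hXv, hDv, map_mul] using
    RingQuot.mkAlgHom_rel F (HRel.x0x (F := F) v)

theorem commute_hX0_hDv (v : Fin n) : Commute (hX0 F n) (hDv F n v) := by
  simpa only [commute_iff_eq, hX0, hXv, hDv, map_mul] using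
    RingQuot.mkAlgHom_rel F (HRel.x0d (F := F) v)

theorem commute_hXv_hDv {v w : Fin n} (h : v ≠ w) : Commute (hXv F n v) (hDv F n w) := by
  simpa only [commute_iff_eq, hX0, hXv, hDv, map_mul] using
    RingQuot.mkAlgHom_rel F (HRel.xd (F := F) v w h)

theorem hDv_mul_hXv_self (v : Fin n) :
    hDv F n v * hXv F n v = hXv F n v * hDv F n v + hX0 F n * hX0 F n := by
  simpa only [hX0, hXv, hDv, map_mul, map_add] using
    RingQuot.mkAlgHom_rel F (HRel.dx (F := F) v)

theorem hX0_mul_hMon (a : ℕ) (i j : Fin n → ℕ) :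
    hX0 F n * hMon F n a i j = hMon F n (a + 1) i j := by
  simp only [hMon, ← mul_assoc, ← pow_succ']

theorem hXv_mul_hMon (v : Fin n) (a : ℕ) (i j : Fin n → ℕ) :
    hXv F n v * hMon F n a i j = hMon F n a (i + Pi.single v 1) j := by
  rw [hMon, hMon, ← mul_assoc, ← mul_assoc, (((commute_hX0_hXv v).symm).pow_right a).eq,
    mul_assoc (hX0 F n ^ a), mul_prod_ofFn_pow _ commute_hXv]

theorem hDv_mul_hMon (v : Fin n) (a : ℕ) (i j : Fin n → ℕ) :
    hDv F n v * hMon F n a i j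
      = hMon F n a i (j + Pi.single v 1) + i v • hMon F n (a + 2) (i - Pi.single v 1) j := by
  have hX : hDv F n v * (List.ofFn fun k => hXv F n k ^ i k).prod
      = (List.ofFn fun k => hXv F n k ^ i k).prod * hDv F n v
        + i v • (hX0 F n * hX0 F n *
          (List.ofFn fun k => hXv F n k ^ (i - Pi.single v 1 : Fin n → ℕ) k).prod) :=
    mul_prod_ofFn_pow_of_mul_eq_add _ commute_hXv v (hDv_mul_hXv_self v)
      (fun k hk => (commute_hXv_hDv hk).symm)
      (fun k => (commute_hX0_hXv k).mul_left (commute_hX0_hXv k)) i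
  rw [hMon, ← mul_assoc, ← mul_assoc, (((commute_hX0_hDv v).symm).pow_right a).eq,
    mul_assoc (hX0 F n ^ a), hX, mul_add, add_mul, hMon, hMon,
    ← mul_prod_ofFn_pow _ commute_hDv, mul_smul_comm, smul_mul_assoc, pow_add, sq]
  simp only [mul_assoc]

variable (F n) in
noncomputable def hMonFamily : ℕ × (Fin n → ℕ) × (Fin n → ℕ) → HWeyl F n :=
  fun p => hMon F n p.1 p.2.1 p.2.2

theorem hMon_mem_span (a : ℕ) (i j : Fin n → ℕ) :
    hMon F n a i j ∈ Submodule.span F (Set.range (hMonFamily F n)) :=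
  Submodule.subset_span ⟨(a, i, j), rfl⟩

theorem span_le_comap_mulLeft_mkAlgHom (x : FreeAlgebra F (HGen n)) :
    Submodule.span F (Set.range (hMonFamily F n)) ≤
      (Submodule.span F (Set.range (hMonFamily F n))).comap
        (LinearMap.mulLeft F (RingQuot.mkAlgHom F (HRel F n) x)) := by
  induction x using FreeAlgebra.induction with
  | grade0 r =>
    intro s hs
    simpa [← Algebra.smul_def] using Submodule.smul_mem _ r hs
  | grade1 g =>
    refine Submodule.span_le.2 ?_
    rintro _ ⟨⟨a, i, j⟩, rfl⟩
    simp only [SetLike.mem_coe, Submodule.mem_comap, LinearMap.mulLeft_apply]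
    cases g with
    | X0 =>
      change hX0 F n * hMon F n a i j ∈ _
      rw [hX0_mul_hMon]
      exact hMon_mem_span _ _ _
    | X v =>
      change hXv F n v * hMon F n a i j ∈ _
      rw [hXv_mul_hMon]
      exact hMon_mem_span _ _ _
    | D v =>
      change hDv F n v * hMon F n a i j ∈ _
      rw [hDv_mul_hMon]
      exact add_mem (hMon_mem_span _ _ _) (nsmul_mem (hMon_mem_span _ _ _) _)
  | mul x y hx hy =>
    intro s hs
    simp only [Submodule.mem_comap, LinearMap.mulLeft_apply, map_mul, mul_assoc]
    exact hx (hy hs)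
  | add x y hx hy =>
    intro s hs
    simp only [Submodule.mem_comap, LinearMap.mulLeft_apply, map_add, add_mul]
    exact add_mem (hx hs) (hy hs)

theorem span_hMonFamily_eq_top : Submodule.span F (Set.range (hMonFamily F n)) = ⊤ := by
  refine Submodule.eq_top_iff'.2 fun f => ?_
  obtain ⟨x, rfl⟩ := RingQuot.mkAlgHom_surjective F (HRel F n) f
  have hone : (1 : HWeyl F n) ∈ Submodule.span F (Set.range (hMonFamily F n)) := by
    simpa [hMon] using hMon_mem_span (F := F) (n := n) 0 0 0
  simpa using span_le_comap_mulLeft_mkAlgHom x hone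

noncomputable instance : DecidableEq (HGen n) := Classical.decEq _

variable (F n) in
noncomputable def genAction : HGen n → Module.End F (MvPolynomial (HGen n) F)
  | .X0 => LinearMap.mulLeft F (X .X0)
  | .X v => LinearMap.mulLeft F (X (.X v))
  | .D v => LinearMap.mulLeft F (X .X0 ^ 2) ∘ₗ (pderiv (.X v)).toLinearMap
      + LinearMap.mulLeft F (X (.D v))

theorem genAction_D_apply (v : Fin n) (p : MvPolynomial (HGen n) F) :
    genAction F n (.D v) p = X .X0 ^ 2 * pderiv (.X v) p + X (.D v) * p := rfl

theorem lift_genAction_eq_of_rel {x y : FreeAlgebra F (HGen n)} (h : HRel F n x y) :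
    FreeAlgebra.lift F (genAction F n) x = FreeAlgebra.lift F (genAction F n) y := by
  refine LinearMap.ext fun p => ?_
  cases h <;>
    simp only [map_mul, map_add, FreeAlgebra.lift_ι_apply, genAction, Module.End.mul_apply,
      LinearMap.add_apply, LinearMap.coe_comp, Function.comp_apply, Derivation.coeFn_coe,
      LinearMap.mulLeft_apply, Derivation.leibniz, Derivation.leibniz_pow, smul_eq_mul,
      Nat.add_one_sub_one, pow_one, pderiv_X, ne_eq, reduceCtorEq, HGen.X.injEq,
      not_false_eq_true, Pi.single_eq_same, Pi.single_eq_of_ne, mul_zero, mul_one, nsmul_zero,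
      add_zero, pderiv_pderiv_comm (HGen.X _) (HGen.X _), *] <;>
    ring

variable (F n) in
noncomputable def action : HWeyl F n →ₐ[F] Module.End F (MvPolynomial (HGen n) F) :=
  RingQuot.liftAlgHom F
    ⟨FreeAlgebra.lift F (genAction F n), fun _ _ => lift_genAction_eq_of_rel⟩

theorem action_mkAlgHom_ι (g : HGen n) :
    action F n (RingQuot.mkAlgHom F (HRel F n) (FreeAlgebra.ι F g)) = genAction F n g := by
  rw [action, RingQuot.liftAlgHom_mkAlgHom_apply, FreeAlgebra.lift_ι_apply]

variable (n) in
noncomputable def hMonExponent (p : ℕ × (Fin n → ℕ) × (Fin n → ℕ)) :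
    HGen n →₀ ℕ :=
  Finsupp.single .X0 p.1 + ∑ k, Finsupp.single (.X k) (p.2.1 k)
    + ∑ k, Finsupp.single (.D k) (p.2.2 k)

theorem hMonExponent_injective : Function.Injective (hMonExponent n) := by
  rintro ⟨a, i, j⟩ ⟨a', i', j'⟩ h
  have h0 := DFunLike.congr_fun h .X0
  have hX := fun k => DFunLike.congr_fun h (.X k)
  have hD := fun k => DFunLike.congr_fun h (.D k)
  simp [hMonExponent, Finsupp.single_apply] at h0 hX hD
  simp [h0, funext hX, funext hD]

theorem pderiv_X_eq_zero_of_mem_supported {q : MvPolynomial (HGen n) F}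
    (hq : q ∈ supported F (Set.range HGen.D)) (v : Fin n) : pderiv (HGen.X v) q = 0 :=
  pderiv_eq_zero_of_notMem_vars fun h => by simpa using mem_supported.1 hq h

theorem action_hMon_one (a : ℕ) (i j : Fin n → ℕ) :
    action F n (hMon F n a i j) 1 = monomial (hMonExponent n (a, i, j)) 1 := by
  have hD : (List.ofFn fun k => genAction F n (.D k) ^ j k).prod 1
      = (List.ofFn fun k => X (.D k) ^ j k).prod * 1 :=
    LinearMap.prod_ofFn_pow_apply_of_apply_eq_mul _ _
      (supported F (Set.range HGen.D)).toSubsemiring (fun k => X_mem_supported.2 ⟨k, rfl⟩)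
      (fun k q hq => by
        rw [genAction_D_apply, pderiv_X_eq_zero_of_mem_supported hq, mul_zero, zero_add])
      j (one_mem _)
  have hX : ∀ q, (List.ofFn fun k => genAction F n (.X k) ^ i k).prod q
      = (List.ofFn fun k => X (.X k) ^ i k).prod * q := fun q =>
    LinearMap.prod_ofFn_pow_apply_of_apply_eq_mul _ _ ⊤ (fun _ => trivial) (fun _ _ _ => rfl) i
      trivial
  simp only [hMon, map_mul, map_pow, map_list_prod, List.map_ofFn, Function.comp_def, hX0, hXv,
    hDv, action_mkAlgHom_ι, Module.End.mul_apply, hD, hX]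
  rw [genAction, LinearMap.pow_mulLeft, LinearMap.mulLeft_apply, mul_one, List.prod_ofFn,
    List.prod_ofFn, hMonExponent]
  simp only [X_pow_eq_monomial, ← monomial_sum_one, monomial_mul, mul_one, add_assoc]

theorem linearIndependent_hMonFamily : LinearIndependent F (hMonFamily F n) := by
  refine LinearIndependent.of_comp
    (LinearMap.applyₗ (1 : MvPolynomial (HGen n) F) ∘ₗ (action F n).toLinearMap) ?_
  have hcomp : (LinearMap.applyₗ 1 ∘ₗ (action F n).toLinearMap) ∘ hMonFamily F n
      = basisMonomials (HGen n) F ∘ hMonExponent n := by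
    funext ⟨a, i, j⟩
    simp [hMonFamily, action_hMon_one, coe_basisMonomials]
  rw [hcomp]
  exact (basisMonomials (HGen n) F).linearIndependent.comp _ hMonExponent_injective

end HWeyl

theorem hweyl_unique_monomial_representation_general (F : Type) [Field F] (n : ℕ)
    (f : HWeyl F n) :
    ∃! c : (ℕ × (Fin n → ℕ) × (Fin n → ℕ)) →₀ F,
      f = c.sum fun p a => a • hMon F n p.1 p.2.1 p.2.2 := by
  have hsurj : Function.Surjective (Finsupp.linearCombination F (HWeyl.hMonFamily F n)) := by
    rw [← LinearMap.range_eq_top, Finsupp.range_linearCombination,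
      HWeyl.span_hMonFamily_eq_top]
  simpa [Finsupp.linearCombination_apply, HWeyl.hMonFamily, eq_comm] using
    (Function.Bijective.existsUnique ⟨HWeyl.linearIndependent_hMonFamily, hsurj⟩ f)

/-- Every element of the homogenized Weyl algebra is uniquely a
finite `F`-linear combination of the monomials `X_0^{i_0} X^i D^j`. -/
theorem hweyl_unique_monomial_representation (F : Type) [Field F] [CharZero F] (n : ℕ)
    (f : HWeyl F n) :
    ∃! c : (ℕ × (Fin n → ℕ) × (Fin n → ℕ)) →₀ F,
      f = c.sum fun p a => a • hMon F n p.1 p.2.1 p.2.2 :=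
  hweyl_unique_monomial_representation_general F n f
end

section
/- If b_1,...,b_s is a system of homogeneous generators of the hA-module hI, then gr(a(b_1)),...,gr(a(b_s)) is a system of generators of the gr(A)-module gr(I). -/
/-- Generators of the Weyl algebra: `X i` and `D i`, `i < n`. -/
inductive WeylGen (n : ℕ) : Type
  | X : Fin n → WeylGen n
  | D : Fin n → WeylGen n

/-- The defining relations of the Weyl algebra:
`X_v X_w = X_w X_v`, `D_v D_w = D_w D_v`, `D_v X_v - X_v D_v = 1`,
`X_v D_w = D_w X_v` for `v ≠ w`. -/
inductive WeylRel (F : Type) [Field F] (n : ℕ) :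
    FreeAlgebra F (WeylGen n) → FreeAlgebra F (WeylGen n) → Prop
  | xx (v w : Fin n) : WeylRel F n
      (FreeAlgebra.ι F (WeylGen.X v) * FreeAlgebra.ι F (WeylGen.X w))
      (FreeAlgebra.ι F (WeylGen.X w) * FreeAlgebra.ι F (WeylGen.X v))
  | dd (v w : Fin n) : WeylRel F n
      (FreeAlgebra.ι F (WeylGen.D v) * FreeAlgebra.ι F (WeylGen.D w))
      (FreeAlgebra.ι F (WeylGen.D w) * FreeAlgebra.ι F (WeylGen.D v))
  | dx (v : Fin n) : WeylRel F n
      (FreeAlgebra.ι F (WeylGen.D v) * FreeAlgebra.ι F (WeylGen.X v))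
      (FreeAlgebra.ι F (WeylGen.X v) * FreeAlgebra.ι F (WeylGen.D v) + 1)
  | xd (v w : Fin n) (h : v ≠ w) : WeylRel F n
      (FreeAlgebra.ι F (WeylGen.X v) * FreeAlgebra.ι F (WeylGen.D w))
      (FreeAlgebra.ι F (WeylGen.D w) * FreeAlgebra.ι F (WeylGen.X v))

/-- The Weyl algebra `A = F[X_1,…,X_n,D_1,…,D_n]`. -/
abbrev Weyl (F : Type) [Field F] (n : ℕ) := RingQuot (WeylRel F n)

noncomputable def wX (F : Type) [Field F] (n : ℕ) (i : Fin n) : Weyl F n :=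
  RingQuot.mkAlgHom F (WeylRel F n) (FreeAlgebra.ι F (WeylGen.X i))

noncomputable def wD (F : Type) [Field F] (n : ℕ) (i : Fin n) : Weyl F n :=
  RingQuot.mkAlgHom F (WeylRel F n) (FreeAlgebra.ι F (WeylGen.D i))

/-- The monomial `X_1^{i_1} ⋯ X_n^{i_n} D_1^{j_1} ⋯ D_n^{j_n}`. -/
noncomputable def wMon (F : Type) [Field F] (n : ℕ) (i j : Fin n → ℕ) : Weyl F n :=
  (List.ofFn fun k => wX F n k ^ i k).prod * (List.ofFn fun k => wD F n k ^ j k).prod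

/-- The image of a generator in the Weyl algebra. -/
noncomputable def wGen (F : Type) [Field F] (n : ℕ) (g : WeylGen n) : Weyl F n :=
  RingQuot.mkAlgHom F (WeylRel F n) (FreeAlgebra.ι F g)

/-- The product of a word in the generators of `A`. -/
noncomputable def wOfList (F : Type) [Field F] (n : ℕ) (w : List (WeylGen n)) : Weyl F n :=
  (w.map (wGen F n)).prod

/-- The filtration of `A` by degree: `A_m` is spanned by products of at most `m`
generators. -/
noncomputable def wFil (F : Type) [Field F] (n : ℕ) (m : ℕ) : Submodule F (Weyl F n) :=
  Submodule.span F {x | ∃ w : List (WeylGen n), w.length ≤ m ∧ x = wOfList F n w}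

/-- The degree of an element of `A` (the least `m` with `z ∈ A_m`). -/
noncomputable def wDeg (F : Type) [Field F] (n : ℕ) (z : Weyl F n) : ℕ :=
  sInf {m | z ∈ wFil F n m}

/-- The image of a generator in `hA`. -/
noncomputable def hGen (F : Type) [Field F] (n : ℕ) (g : HGen n) : HWeyl F n :=
  RingQuot.mkAlgHom F (HRel F n) (FreeAlgebra.ι F g)

/-- The product of a word in the generators of `hA`. -/
noncomputable def hOfList (F : Type) [Field F] (n : ℕ) (w : List (HGen n)) : HWeyl F n :=
  (w.map (hGen F n)).prod

/-- The embedding of Weyl generators into the generators of `hA`. -/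
def embGen (n : ℕ) : WeylGen n → HGen n
  | WeylGen.X i => HGen.X i
  | WeylGen.D i => HGen.D i

/-- The value in `A` of a finite sum of terms: each term is a scalar together with a
word in the generators. -/
noncomputable def wRep (F : Type) [Field F] (n : ℕ)
    (L : List (F × List (WeylGen n))) : Weyl F n :=
  (L.map fun t => t.1 • wOfList F n t.2).sum

/-- The homogenization (relative to a target degree `d`) of a sum of terms:
`Σ_j z_j ↦ Σ_j z_j X_0^{d - deg z_j}`. -/
noncomputable def hRep (F : Type) [Field F] (n : ℕ)
    (L : List (F × List (WeylGen n))) (d : ℕ) : HWeyl F n :=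
  (L.map fun t =>
    t.1 • (hX0 F n ^ (d - t.2.length) * hOfList F n (t.2.map (embGen n)))).sum

/-- `ord_{X_0} z`: the largest `μ` with `z ∈ X_0^μ · hA`. -/
noncomputable def ordX0 (F : Type) [Field F] (n : ℕ) (z : HWeyl F n) : ℕ :=
  sSup {μ : ℕ | ∃ w : HWeyl F n, z = hX0 F n ^ μ * w}

open scoped BigOperators

/-- The `m`-th homogeneous component of `hA`. -/
noncomputable def hComp (F : Type) [Field F] (n : ℕ) (m : ℕ) : Submodule F (HWeyl F n) :=
  Submodule.span F
    {x | ∃ i0 : ℕ, ∃ i j : Fin n → ℕ,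
      i0 + (∑ k, i k) + (∑ k, j k) = m ∧ x = hMon F n i0 i j}

/-- `hfun : A → hA` is the homogenization map iff it is computed by
`Σ_j z_j ↦ Σ_j z_j X_0^{deg z - deg z_j}` on any representation of `z` as a sum of
terms of degrees at most `deg z`. -/
def IsHomogenization (F : Type) [Field F] (n : ℕ) (hfun : Weyl F n → HWeyl F n) : Prop :=
  ∀ z : Weyl F n, ∀ L : List (F × List (WeylGen n)),
    wRep F n L = z → (∀ t ∈ L, t.2.length ≤ wDeg F n z) →
    hfun z = hRep F n L (wDeg F n z)

/-- The degree of a vector: the maximum of the degrees of its components. -/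
noncomputable def wDegVec (F : Type) [Field F] (n l : ℕ) (z : Fin l → Weyl F n) : ℕ :=
  Finset.univ.sup fun i => wDeg F n (z i)

/-- The homogenization of a vector:
`h z = (h(z_1) X_0^{deg z - deg z_1}, …, h(z_l) X_0^{deg z - deg z_l})`. -/
noncomputable def hVec (F : Type) [Field F] (n l : ℕ) (hfun : Weyl F n → HWeyl F n)
    (z : Fin l → Weyl F n) : Fin l → HWeyl F n :=
  fun i => hfun (z i) * hX0 F n ^ (wDegVec F n l z - wDeg F n (z i))

/-- The homogenization `hI` of a submodule `I ⊆ A^l`: the least `F`-linear subspace of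
`hA^l` containing all `h z`, `z ∈ I`. -/
noncomputable def hImod (F : Type) [Field F] (n l : ℕ) (hfun : Weyl F n → HWeyl F n)
    (I : Submodule (Weyl F n) (Fin l → Weyl F n)) : Submodule F (Fin l → HWeyl F n) :=
  Submodule.span F {x | ∃ z ∈ I, x = hVec F n l hfun z}

/-- `(hA^l)_m`: vectors all of whose components are homogeneous of degree `m`. -/
noncomputable def hPil (F : Type) [Field F] (n l : ℕ) (m : ℕ) :
    Submodule F (Fin l → HWeyl F n) :=
  Submodule.pi Set.univ fun _ => hComp F n m

/-- `A_m^l`. -/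
noncomputable def Aml (F : Type) [Field F] (n l : ℕ) (m : ℕ) :
    Submodule F (Fin l → Weyl F n) :=
  Submodule.pi Set.univ fun _ => wFil F n m

/-- `I_m = I ∩ A_m^l` as an `F`-subspace. -/
noncomputable def Ifil (F : Type) [Field F] (n l : ℕ)
    (I : Submodule (Weyl F n) (Fin l → Weyl F n)) (m : ℕ) :
    Submodule F (Fin l → Weyl F n) :=
  I.restrictScalars F ⊓ Aml F n l m

/-- `(hI)_m`: the `m`-th homogeneous component of `hI`. -/
noncomputable def hIfil (F : Type) [Field F] (n l : ℕ) (hfun : Weyl F n → HWeyl F n)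
    (I : Submodule (Weyl F n) (Fin l → Weyl F n)) (m : ℕ) :
    Submodule F (Fin l → HWeyl F n) :=
  hImod F n l hfun I ⊓ hPil F n l m

/-- Componentwise dehomogenization `hA^l → A^l` as an `F`-linear map. -/
noncomputable def aLin (F : Type) [Field F] (n l : ℕ) (a : HWeyl F n →ₐ[F] Weyl F n) :
    (Fin l → HWeyl F n) →ₗ[F] (Fin l → Weyl F n) :=
  LinearMap.pi fun i => a.toLinearMap.comp (LinearMap.proj i)

/-- `I_{m-1}` with the convention `I_{-1} = 0`. -/
noncomputable def IfilPrev (F : Type) [Field F] (n l : ℕ)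
    (I : Submodule (Weyl F n) (Fin l → Weyl F n)) : ℕ → Submodule F (Fin l → Weyl F n)
  | 0 => ⊥
  | (m + 1) => Ifil F n l I m


/-!
Homogenize `z ∈ I_m` to degree `m`: `W = X_0^{m - deg z} · h(z)` lies in `hI` and is
homogeneous of degree `m`. Write `W = Σ e_v b_v` and keep only the degree-`m` part of every
summand; as `b_v` is homogeneous of degree `d_v`, this replaces `e_v` by its component of degree
`m - d_v` (by `0` if `d_v > m`). Setting `X_0 = 1` then gives `z = Σ a(e_v) a(b_v)` exactly,
with `deg a(e_v) ≤ m - d_v` and `deg a(b_v) ≤ d_v`, so the remainder in `I_{m-1}` even vanishes.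
-/

open Polynomial

section HomogeneousComponents

variable {F : Type} [Field F] {n : ℕ}

lemma hOfList_append (u v : List (HGen n)) :
    hOfList F n (u ++ v) = hOfList F n u * hOfList F n v := by
  simp [hOfList]

/-- Spanned by all words of length `m`, not only by the normally ordered monomials spanning
`hComp m`, so that closure under multiplication is immediate. -/
noncomputable def hGrade (F : Type) [Field F] (n m : ℕ) : Submodule F (HWeyl F n) :=
  Submodule.span F {x | ∃ w : List (HGen n), w.length = m ∧ x = hOfList F n w}

instance : SetLike.GradedMonoid (hGrade F n) where
  one_mem := Submodule.subset_span ⟨[], rfl, by simp [hOfList]⟩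
  mul_mem i j x y hx hy := by
    have hxy := Submodule.mul_mem_mul hx hy
    rw [hGrade, hGrade, Submodule.span_mul_span] at hxy
    refine Submodule.span_mono ?_ hxy
    rintro _ ⟨_, ⟨u, rfl, rfl⟩, _, ⟨v, rfl, rfl⟩, rfl⟩
    exact ⟨u ++ v, List.length_append, (hOfList_append u v).symm⟩

lemma hOfList_mem_hGrade (w : List (HGen n)) : hOfList F n w ∈ hGrade F n w.length :=
  Submodule.subset_span ⟨w, rfl, rfl⟩

lemma hGen_mem_hGrade (g : HGen n) : hGen F n g ∈ hGrade F n 1 := by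
  simpa [hOfList] using hOfList_mem_hGrade (F := F) [g]

lemma hGen_pow_mem_hGrade (g : HGen n) (k : ℕ) : hGen F n g ^ k ∈ hGrade F n k := by
  simpa using SetLike.pow_mem_graded k (hGen_mem_hGrade (F := F) g)

lemma hComp_le_hGrade (m : ℕ) : hComp F n m ≤ hGrade F n m := by
  refine Submodule.span_le.2 ?_
  rintro _ ⟨i0, i, j, rfl, rfl⟩
  have hX := SetLike.list_prod_ofFn_mem_graded (A := hGrade F n) i (fun k => hXv F n k ^ i k)
    fun k => hGen_pow_mem_hGrade (HGen.X k) (i k)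
  have hD := SetLike.list_prod_ofFn_mem_graded (A := hGrade F n) j (fun k => hDv F n k ^ j k)
    fun k => hGen_pow_mem_hGrade (HGen.D k) (j k)
  rw [List.sum_ofFn] at hX hD
  exact SetLike.mul_mem_graded (SetLike.mul_mem_graded (hGen_pow_mem_hGrade HGen.X0 i0) hX) hD

noncomputable def hGradingFree (F : Type) [Field F] (n : ℕ) :
    FreeAlgebra F (HGen n) →ₐ[F] (HWeyl F n)[X] :=
  FreeAlgebra.lift F fun g => monomial 1 (hGen F n g)

lemma hGradingFree_of_rel {x y : FreeAlgebra F (HGen n)} (h : HRel F n x y) :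
    hGradingFree F n x = monomial 2 (RingQuot.mkAlgHom F (HRel F n) x) ∧
      hGradingFree F n y = monomial 2 (RingQuot.mkAlgHom F (HRel F n) y) := by
  cases h <;> simp [hGradingFree, hGen, monomial_mul_monomial]

/-- The grading `g ↦ g T` on generators; it is well defined because every relation of `hA`
is homogeneous of degree 2. -/
noncomputable def hGrading (F : Type) [Field F] (n : ℕ) : HWeyl F n →ₐ[F] (HWeyl F n)[X] :=
  RingQuot.liftAlgHom F ⟨hGradingFree F n, fun _ _ h => by
    rw [(hGradingFree_of_rel h).1, (hGradingFree_of_rel h).2, RingQuot.mkAlgHom_rel F h]⟩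

lemma hGrading_hGen (g : HGen n) : hGrading F n (hGen F n g) = monomial 1 (hGen F n g) := by
  simp [hGrading, hGen, hGradingFree]

lemma hGrading_hOfList (w : List (HGen n)) :
    hGrading F n (hOfList F n w) = monomial w.length (hOfList F n w) := by
  induction w with
  | nil => simp [hOfList]
  | cons g w ih =>
    simp only [hOfList, List.map_cons, List.prod_cons, map_mul] at ih ⊢
    rw [hGrading_hGen, ih, monomial_mul_monomial, List.length_cons, add_comm]

lemma hGrading_of_mem_hGrade {m : ℕ} {z : HWeyl F n} (hz : z ∈ hGrade F n m) :
    hGrading F n z = monomial m z := by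
  induction hz using Submodule.span_induction with
  | mem x hx => obtain ⟨w, rfl, rfl⟩ := hx; exact hGrading_hOfList w
  | zero => simp
  | add x y _ _ hx hy => rw [map_add, hx, hy, map_add]
  | smul c x _ hx => rw [map_smul, hx, smul_monomial]

noncomputable def hProj (F : Type) [Field F] (n m : ℕ) (z : HWeyl F n) : HWeyl F n :=
  (hGrading F n z).coeff m

lemma hProj_of_mem_hGrade {m : ℕ} {z : HWeyl F n} (hz : z ∈ hGrade F n m) :
    hProj F n m z = z := by
  rw [hProj, hGrading_of_mem_hGrade hz, coeff_monomial, if_pos rfl]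

lemma hProj_mem_of_mem_hGrade (m : ℕ) {k : ℕ} {z : HWeyl F n} (hz : z ∈ hGrade F n k) :
    hProj F n m z ∈ hGrade F n m := by
  rw [hProj, hGrading_of_mem_hGrade hz, coeff_monomial]
  split_ifs with hkm
  · exact hkm ▸ hz
  · exact zero_mem _

lemma hProj_mem_hGrade (m : ℕ) (z : HWeyl F n) : hProj F n m z ∈ hGrade F n m := by
  obtain ⟨y, rfl⟩ := RingQuot.mkAlgHom_surjective F (HRel F n) z
  induction y using FreeAlgebra.induction generalizing m with
  | grade0 r =>
    rw [AlgHom.commutes, Algebra.algebraMap_eq_smul_one, hProj, map_smul, coeff_smul]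
    exact Submodule.smul_mem _ r (hProj_mem_of_mem_hGrade m SetLike.GradedOne.one_mem)
  | grade1 g => exact hProj_mem_of_mem_hGrade m (hGen_mem_hGrade g)
  | mul x y hx hy =>
    rw [hProj, map_mul, map_mul, coeff_mul]
    refine Submodule.sum_mem _ fun p hp => ?_
    rw [← Finset.HasAntidiagonal.mem_antidiagonal.mp hp]
    exact SetLike.mul_mem_graded (hx p.1) (hy p.2)
  | add x y hx hy =>
    rw [hProj, map_add, map_add, coeff_add]
    exact add_mem (hx m) (hy m)

lemma hProj_mul_of_mem_hGrade {d m : ℕ} {y : HWeyl F n} (hy : y ∈ hGrade F n d)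
    (x : HWeyl F n) :
    hProj F n m (x * y) = if d ≤ m then hProj F n (m - d) x * y else 0 := by
  rw [hProj, hProj, map_mul, hGrading_of_mem_hGrade hy, ← C_mul_X_pow_eq_monomial,
    ← mul_assoc, coeff_mul_X_pow', coeff_mul_C]

lemma hProj_sum {ι : Type*} (t : Finset ι) (f : ι → HWeyl F n) (m : ℕ) :
    hProj F n m (∑ v ∈ t, f v) = ∑ v ∈ t, hProj F n m (f v) := by
  simp only [hProj, map_sum, finsetSum_coeff]

end HomogeneousComponents

section WeylFiltration

variable {F : Type} [Field F] {n : ℕ}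

lemma wOfList_append (u v : List (WeylGen n)) :
    wOfList F n (u ++ v) = wOfList F n u * wOfList F n v := by
  simp [wOfList]

instance : SetLike.GradedMonoid (wFil F n) where
  one_mem := Submodule.subset_span ⟨[], le_rfl, by simp [wOfList]⟩
  mul_mem i j x y hx hy := by
    have hxy := Submodule.mul_mem_mul hx hy
    rw [wFil, wFil, Submodule.span_mul_span] at hxy
    refine Submodule.span_mono ?_ hxy
    rintro _ ⟨_, ⟨u, hu, rfl⟩, _, ⟨v, hv, rfl⟩, rfl⟩
    exact ⟨u ++ v, by simp only [List.length_append]; omega, (wOfList_append u v).symm⟩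

lemma wOfList_mem_wFil {w : List (WeylGen n)} {m : ℕ} (h : w.length ≤ m) :
    wOfList F n w ∈ wFil F n m :=
  Submodule.subset_span ⟨w, h, rfl⟩

lemma wFil_mono {m m' : ℕ} (h : m ≤ m') : wFil F n m ≤ wFil F n m' :=
  Submodule.span_mono fun _ ⟨w, hw, hx⟩ => ⟨w, hw.trans h, hx⟩

lemma wGen_mem_wFil (g : WeylGen n) : wGen F n g ∈ wFil F n 1 := by
  simpa [wOfList] using wOfList_mem_wFil (F := F) (w := [g]) le_rfl

lemma exists_mem_wFil (z : Weyl F n) : ∃ m, z ∈ wFil F n m := by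
  obtain ⟨y, rfl⟩ := RingQuot.mkAlgHom_surjective F (WeylRel F n) z
  induction y using FreeAlgebra.induction with
  | grade0 r =>
    rw [AlgHom.commutes, Algebra.algebraMap_eq_smul_one]
    exact ⟨0, Submodule.smul_mem _ r SetLike.GradedOne.one_mem⟩
  | grade1 g => exact ⟨1, wGen_mem_wFil g⟩
  | mul x y hx hy =>
    obtain ⟨d, hd⟩ := hx
    obtain ⟨e, he⟩ := hy
    exact ⟨d + e, by rw [map_mul]; exact SetLike.mul_mem_graded hd he⟩
  | add x y hx hy =>
    obtain ⟨d, hd⟩ := hx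
    obtain ⟨e, he⟩ := hy
    exact ⟨d + e, by
      rw [map_add]
      exact add_mem (wFil_mono (by omega) hd) (wFil_mono (by omega) he)⟩

lemma mem_wFil_wDeg (z : Weyl F n) : z ∈ wFil F n (wDeg F n z) :=
  Nat.sInf_mem (exists_mem_wFil z)

lemma wDeg_le_of_mem {z : Weyl F n} {m : ℕ} (h : z ∈ wFil F n m) : wDeg F n z ≤ m :=
  Nat.sInf_le h

lemma wDeg_le_wDegVec {l : ℕ} (z : Fin l → Weyl F n) (i : Fin l) :
    wDeg F n (z i) ≤ wDegVec F n l z :=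
  Finset.le_sup (f := fun i => wDeg F n (z i)) (Finset.mem_univ i)

lemma wDegVec_le_of_mem {l m : ℕ} {z : Fin l → Weyl F n} (h : ∀ i, z i ∈ wFil F n m) :
    wDegVec F n l z ≤ m :=
  Finset.sup_le fun i _ => wDeg_le_of_mem (h i)

lemma exists_wRep_eq {z : Weyl F n} {m : ℕ} (h : z ∈ wFil F n m) :
    ∃ L : List (F × List (WeylGen n)), wRep F n L = z ∧ ∀ t ∈ L, t.2.length ≤ m := by
  obtain ⟨k, c, x, rfl⟩ := Submodule.mem_span_set'.mp h
  choose w hw hxw using fun i => (x i).2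
  refine ⟨List.ofFn fun i => (c i, w i), ?_, ?_⟩
  · simp only [wRep, List.map_ofFn, Function.comp_def, List.sum_ofFn, hxw]
  · simp only [List.mem_ofFn, forall_exists_index]
    rintro _ i rfl
    exact hw i

end WeylFiltration

section Homogenization

variable {F : Type} [Field F] {n : ℕ}

lemma hfun_mem_hGrade {hfun : Weyl F n → HWeyl F n} (hh : IsHomogenization F n hfun)
    (z : Weyl F n) : hfun z ∈ hGrade F n (wDeg F n z) := by
  obtain ⟨L, hLz, hLdeg⟩ := exists_wRep_eq (mem_wFil_wDeg z)
  rw [hh z L hLz hLdeg, hRep]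
  refine list_sum_mem fun x hx => ?_
  obtain ⟨t, ht, rfl⟩ := List.mem_map.mp hx
  have hword := hOfList_mem_hGrade (F := F) (t.2.map (embGen n))
  rw [List.length_map] at hword
  have hprod := SetLike.mul_mem_graded (hGen_pow_mem_hGrade HGen.X0 (wDeg F n z - t.2.length))
    hword
  rw [Nat.sub_add_cancel (hLdeg t ht)] at hprod
  exact Submodule.smul_mem _ _ hprod

lemma hVec_smul_mem_hGrade {l : ℕ} {hfun : Weyl F n → HWeyl F n}
    (hh : IsHomogenization F n hfun) {m : ℕ} {z : Fin l → Weyl F n}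
    (hz : wDegVec F n l z ≤ m) (i : Fin l) :
    (hX0 F n ^ (m - wDegVec F n l z) • hVec F n l hfun z) i ∈ hGrade F n m := by
  have hprod := SetLike.mul_mem_graded (hGen_pow_mem_hGrade HGen.X0 (m - wDegVec F n l z))
    (SetLike.mul_mem_graded (hfun_mem_hGrade hh (z i))
      (hGen_pow_mem_hGrade HGen.X0 (wDegVec F n l z - wDeg F n (z i))))
  have hzi := wDeg_le_wDegVec z i
  rwa [show m - wDegVec F n l z + (wDeg F n (z i) + (wDegVec F n l z - wDeg F n (z i))) = m by
    omega] at hprod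

end Homogenization

section Dehomogenization

variable {F : Type} [Field F] {n : ℕ} (a : HWeyl F n →ₐ[F] Weyl F n)

lemma dehom_hfun (ha0 : a (hX0 F n) = 1)
    (hemb : ∀ g, a (hGen F n (embGen n g)) = wGen F n g)
    {hfun : Weyl F n → HWeyl F n} (hh : IsHomogenization F n hfun) (z : Weyl F n) :
    a (hfun z) = z := by
  obtain ⟨L, hLz, hLdeg⟩ := exists_wRep_eq (mem_wFil_wDeg z)
  rw [hh z L hLz hLdeg, ← hLz, hRep, wRep, map_list_sum, List.map_map]
  congr 1
  refine List.map_congr_left fun t _ => ?_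
  simp [hOfList, wOfList, map_list_prod, ha0, hemb, Function.comp_def]

lemma dehom_hVec_smul {l : ℕ} (ha0 : a (hX0 F n) = 1)
    (hemb : ∀ g, a (hGen F n (embGen n g)) = wGen F n g)
    {hfun : Weyl F n → HWeyl F n} (hh : IsHomogenization F n hfun) (k : ℕ)
    (z : Fin l → Weyl F n) : aLin F n l a (hX0 F n ^ k • hVec F n l hfun z) = z := by
  ext i
  simp [aLin, hVec, ha0, dehom_hfun a ha0 hemb hh]

lemma dehom_hGen_embGen (haX : ∀ i, a (hXv F n i) = wX F n i)
    (haD : ∀ i, a (hDv F n i) = wD F n i) (g : WeylGen n) :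
    a (hGen F n (embGen n g)) = wGen F n g := by
  cases g
  exacts [haX _, haD _]

lemma dehom_hGen_mem_wFil (ha0 : a (hX0 F n) = 1) (haX : ∀ i, a (hXv F n i) = wX F n i)
    (haD : ∀ i, a (hDv F n i) = wD F n i) (g : HGen n) : a (hGen F n g) ∈ wFil F n 1 := by
  cases g with
  | X0 => exact ha0 ▸ wFil_mono zero_le_one SetLike.GradedOne.one_mem
  | X i => exact dehom_hGen_embGen a haX haD (.X i) ▸ wGen_mem_wFil _
  | D i => exact dehom_hGen_embGen a haX haD (.D i) ▸ wGen_mem_wFil _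

lemma dehom_mem_wFil (hgen : ∀ g, a (hGen F n g) ∈ wFil F n 1) {k : ℕ} {z : HWeyl F n}
    (hz : z ∈ hGrade F n k) : a z ∈ wFil F n k := by
  induction hz using Submodule.span_induction with
  | mem x hx =>
    obtain ⟨w, rfl, rfl⟩ := hx
    rw [hOfList, map_list_prod, List.map_map, Function.comp_def]
    simpa using SetLike.list_prod_map_mem_graded w (fun _ => 1) _ fun g _ => hgen g
  | zero => rw [map_zero]; exact zero_mem _
  | add x y _ _ hx hy => rw [map_add]; exact add_mem hx hy
  | smul c x _ hx => rw [map_smul]; exact Submodule.smul_mem _ c hx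

lemma aLin_sum_smul {l s : ℕ} (e : Fin s → HWeyl F n) (b : Fin s → Fin l → HWeyl F n) :
    aLin F n l a (∑ v, e v • b v) = ∑ v, a (e v) • aLin F n l a (b v) := by
  ext i
  simp [aLin, Finset.sum_apply]

end Dehomogenization

lemma exists_homogeneous_coeffs {F : Type} [Field F] {n l s m : ℕ}
    {b : Fin s → Fin l → HWeyl F n} {d : Fin s → ℕ} (hb : ∀ v i, b v i ∈ hGrade F n (d v))
    {W : Fin l → HWeyl F n} (hW : ∀ i, W i ∈ hGrade F n m)
    (hspan : W ∈ Submodule.span (HWeyl F n) (Set.range b)) :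
    ∃ e : Fin s → HWeyl F n, (∀ v, e v ∈ hGrade F n (m - d v)) ∧ (∀ v, m < d v → e v = 0) ∧
      W = ∑ v, e v • b v := by
  obtain ⟨e, rfl⟩ := (Submodule.mem_span_range_iff_exists_fun _).mp hspan
  refine ⟨fun v => if d v ≤ m then hProj F n (m - d v) (e v) else 0, fun v => ?_,
    fun v hv => if_neg (by omega), ?_⟩
  · dsimp only
    split_ifs
    · exact hProj_mem_hGrade _ _
    · exact zero_mem _
  · ext i
    simp only [Finset.sum_apply, Pi.smul_apply, smul_eq_mul] at hW ⊢
    rw [← hProj_of_mem_hGrade (hW i), hProj_sum]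
    refine Finset.sum_congr rfl fun v _ => ?_
    rw [hProj_mul_of_mem_hGrade (hb v i), ite_mul, zero_mul]

theorem graded_generators_from_homogenization_general (F : Type) [Field F]
    (n l s : ℕ) (I : Submodule (Weyl F n) (Fin l → Weyl F n))
    (hfun : Weyl F n → HWeyl F n) (hh : IsHomogenization F n hfun)
    (a : HWeyl F n →ₐ[F] Weyl F n)
    (ha0 : a (hX0 F n) = 1)
    (haX : ∀ i, a (hXv F n i) = wX F n i)
    (haD : ∀ i, a (hDv F n i) = wD F n i)
    (b : Fin s → (Fin l → HWeyl F n))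
    (hbhom : ∀ v, ∃ m : ℕ, b v ∈ hPil F n l m)
    (hbgen : (Submodule.span (HWeyl F n) (Set.range b)).restrictScalars F =
      hImod F n l hfun I) :
    ∀ m : ℕ, ∀ z ∈ Ifil F n l I m,
      ∃ c : Fin s → Weyl F n,
        (∀ v, c v = 0 ∨
          (wDegVec F n l (aLin F n l a (b v)) ≤ m ∧
            c v ∈ wFil F n (m - wDegVec F n l (aLin F n l a (b v))))) ∧
        z - (∑ v, c v • aLin F n l a (b v)) ∈ IfilPrev F n l I m := by
  intro m z ⟨hzI, hzA⟩
  have hgen := dehom_hGen_mem_wFil a ha0 haX haD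
  have hzm : wDegVec F n l z ≤ m := wDegVec_le_of_mem fun i => hzA i trivial
  set W := hX0 F n ^ (m - wDegVec F n l z) • hVec F n l hfun z
  have hWspan : W ∈ Submodule.span (HWeyl F n) (Set.range b) := by
    have hzh : hVec F n l hfun z ∈ hImod F n l hfun I := Submodule.subset_span ⟨z, hzI, rfl⟩
    rw [← hbgen] at hzh
    exact Submodule.smul_mem _ _ hzh
  choose d hd using hbhom
  have hbd : ∀ v i, b v i ∈ hGrade F n (d v) := fun v i => hComp_le_hGrade _ (hd v i trivial)
  obtain ⟨e, he, he0, hWe⟩ :=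
    exists_homogeneous_coeffs hbd (hVec_smul_mem_hGrade hh hzm) hWspan
  refine ⟨fun v => a (e v), fun v => ?_, ?_⟩
  · rcases le_or_gt (d v) m with hv | hv
    · have hbv : wDegVec F n l (aLin F n l a (b v)) ≤ d v :=
        wDegVec_le_of_mem fun i => dehom_mem_wFil a hgen (hbd v i)
      exact Or.inr ⟨hbv.trans hv, wFil_mono (by omega) (dehom_mem_wFil a hgen (he v))⟩
    · exact Or.inl (show a (e v) = 0 by rw [he0 v hv, map_zero])
  · rw [← aLin_sum_smul, ← hWe, dehom_hVec_smul a ha0 (dehom_hGen_embGen a haX haD) hh, sub_self]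
    cases m <;> exact zero_mem _

/-- If `b_1,…,b_s` are homogeneous generators of the `hA`-module `hI`,
then `gr(a(b_1)),…,gr(a(b_s))` generate the `gr(A)`-module `gr(I)`: every `z ∈ I_m`
agrees modulo `I_{m-1}` with a combination `Σ c_v • a(b_v)` with
`deg c_v ≤ m - deg a(b_v)`. -/
theorem graded_generators_from_homogenization (F : Type) [Field F] [CharZero F]
    (n l s : ℕ) (I : Submodule (Weyl F n) (Fin l → Weyl F n))
    (hfun : Weyl F n → HWeyl F n) (hh : IsHomogenization F n hfun)
    (a : HWeyl F n →ₐ[F] Weyl F n)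
    (ha0 : a (hX0 F n) = 1)
    (haX : ∀ i, a (hXv F n i) = wX F n i)
    (haD : ∀ i, a (hDv F n i) = wD F n i)
    (b : Fin s → (Fin l → HWeyl F n))
    (hbhom : ∀ v, ∃ m : ℕ, b v ∈ hPil F n l m)
    (hbgen : (Submodule.span (HWeyl F n) (Set.range b)).restrictScalars F =
      hImod F n l hfun I) :
    ∀ m : ℕ, ∀ z ∈ Ifil F n l I m,
      ∃ c : Fin s → Weyl F n,
        (∀ v, c v = 0 ∨
          (wDegVec F n l (aLin F n l a (b v)) ≤ m ∧
            c v ∈ wFil F n (m - wDegVec F n l (aLin F n l a (b v))))) ∧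
        z - (∑ v, c v • aLin F n l a (b v)) ∈ IfilPrev F n l I m :=
  graded_generators_from_homogenization_general F n l s I hfun hh a ha0 haX haD b hbhom hbgen
end

section
/- Let n, l, m, d be positive integers with l ≥ 2 and m ≥ (2n+1)·l·d, where d ≥ 1. Then l·C(m−d+2n, 2n) > (l−1)·C(m+2n, 2n), where C denotes the binomial coefficient. -/
/-- Discrete Bernoulli-type bound: `(b+1)^k ≤ b^k + k·(b+1)^(k-1)`. -/
lemma pow_succ_le_aux (b : ℕ) : ∀ k : ℕ, (b + 1) ^ k ≤ b ^ k + k * (b + 1) ^ (k - 1)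
  | 0 => by simp
  | 1 => by simp [pow_one]
  | (k + 2) => by
    have ih := pow_succ_le_aux b (k + 1)
    have h2 : (b + 1) * (b + 1) ^ (k + 1) ≤
        (b + 1) * (b ^ (k + 1) + (k + 1) * (b + 1) ^ k) :=
      Nat.mul_le_mul_left _ ih
    have h3 : b ^ (k + 1) ≤ (b + 1) ^ (k + 1) :=
      Nat.pow_le_pow_left (Nat.le_succ b) _
    calc (b + 1) ^ (k + 2) = (b + 1) * (b + 1) ^ (k + 1) := by ring
      _ ≤ (b + 1) * (b ^ (k + 1) + (k + 1) * (b + 1) ^ k) := h2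
      _ = b ^ (k + 2) + b ^ (k + 1) + (k + 1) * (b + 1) ^ (k + 1) := by ring
      _ ≤ b ^ (k + 2) + (b + 1) ^ (k + 1) + (k + 1) * (b + 1) ^ (k + 1) := by omega
      _ = b ^ (k + 2) + (k + 2) * (b + 1) ^ (k + 2 - 1) := by
          show b ^ (k + 2) + (b + 1) ^ (k + 1) + (k + 1) * (b + 1) ^ (k + 1)
            = b ^ (k + 2) + (k + 2) * (b + 1) ^ (k + 1)
          ring

/-- Product inequality through descending factorials. -/
lemma desc_prod_le (K c m m' : ℕ)
    (h : ∀ j : ℕ, 1 ≤ j → K * (m + j) ≤ c * (m' + j)) :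
    ∀ k : ℕ, K ^ k * (m + k).descFactorial k ≤ c ^ k * (m' + k).descFactorial k
  | 0 => by simp
  | (k + 1) => by
    have ih := desc_prod_le K c m m' h k
    have hstep := h (k + 1) (Nat.le_add_left 1 k)
    have e1 : (m + (k + 1)).descFactorial (k + 1) = (m + (k + 1)) * (m + k).descFactorial k := by
      have e : m + (k + 1) = (m + k) + 1 := by ring
      rw [e, Nat.succ_descFactorial_succ]
    have e2 : (m' + (k + 1)).descFactorial (k + 1)
        = (m' + (k + 1)) * (m' + k).descFactorial k := by
      have e : m' + (k + 1) = (m' + k) + 1 := by ring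
      rw [e, Nat.succ_descFactorial_succ]
    calc K ^ (k + 1) * (m + (k + 1)).descFactorial (k + 1)
        = (K * (m + (k + 1))) * (K ^ k * (m + k).descFactorial k) := by rw [e1]; ring
      _ ≤ (c * (m' + (k + 1))) * (c ^ k * (m' + k).descFactorial k) :=
          Nat.mul_le_mul hstep ih
      _ = c ^ (k + 1) * (m' + (k + 1)).descFactorial (k + 1) := by rw [e2]; ring

/-- Key numeric inequality: `(l-1)·c^(2n) < l·(c-1)^(2n)` when `c = (2n+1)·l`. -/
lemma key_num (n l c : ℕ) (hn : 1 ≤ n) (hl : 2 ≤ l) (hc : l * (2 * n) + l = c) :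
    (l - 1) * c ^ (2 * n) < l * (c - 1) ^ (2 * n) := by
  have hcpos : 0 < c := by omega
  have hKc : (c - 1) + 1 = c := by omega
  have hb := pow_succ_le_aux (c - 1) (2 * n)
  rw [hKc] at hb
  set X : ℕ := (c - 1) ^ (2 * n) with hX
  set Y : ℕ := c ^ (2 * n - 1) with hY
  have hYpos : 0 < Y := by positivity
  have hcY : c ^ (2 * n) = c * Y := by
    rw [hY, ← pow_succ']
    congr 1
    omega
  rw [hcY] at hb ⊢
  -- hb : c * Y ≤ X + 2*n*Y; goal : (l-1)*(c*Y) < l*X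
  have hXlow : (c - 2 * n) * Y ≤ X := by
    rw [Nat.sub_mul]; omega
  have hchain : l * ((c - 2 * n) * Y) ≤ l * X := Nat.mul_le_mul_left _ hXlow
  have hmain : (l - 1) * (c * Y) < l * ((c - 2 * n) * Y) := by
    have hco : (l - 1) * (c * Y) = (l * c - c) * Y := by
      rw [Nat.sub_mul, Nat.sub_mul, Nat.one_mul, Nat.mul_assoc]
    have hco2 : l * ((c - 2 * n) * Y) = (l * c - l * (2 * n)) * Y := by
      rw [← Nat.mul_assoc, Nat.mul_sub]
    rw [hco, hco2]
    apply Nat.mul_lt_mul_of_lt_of_le _ (le_refl Y) hYpos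
    have h2 : c ≤ l * c := Nat.le_mul_of_pos_left c (by omega)
    omega
  exact lt_of_lt_of_le hmain hchain

/-- For positive integers `n, l, m, d` with `l ≥ 2` and
`m ≥ (2n+1)·l·d`, one has `l·C(m-d+2n, 2n) > (l-1)·C(m+2n, 2n)`.
This is the counting inequality guaranteeing a nonzero kernel of a homogeneous linear
map `((hA)_{m-d})^l → ((hA)_m)^{l-1}`. -/
theorem binomial_kernel_inequality (n l m d : ℕ)
    (hn : 1 ≤ n) (hl : 2 ≤ l) (hd : 1 ≤ d) (hm : (2 * n + 1) * l * d ≤ m) :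
    (l - 1) * Nat.choose (m + 2 * n) (2 * n) <
      l * Nat.choose (m - d + 2 * n) (2 * n) := by
  obtain ⟨c, hc⟩ : ∃ c, (2 * n + 1) * l = c := ⟨_, rfl⟩
  rw [hc] at hm
  have hc' : l * (2 * n) + l = c := by rw [← hc]; ring
  have hcpos : 0 < c := by omega
  have hdm : d ≤ m := le_trans (Nat.le_mul_of_pos_left d (by omega)) hm
  -- pointwise factor inequality: (c-1)*(m+j) ≤ c*((m-d)+j)
  have hpt : ∀ j : ℕ, 1 ≤ j → (c - 1) * (m + j) ≤ c * ((m - d) + j) := by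
    intro j hj
    have hcd : c * d ≤ m := hm
    have hKc : (c - 1) + 1 = c := by omega
    have key : (c - 1) * (m + j) + (m + j) = c * (m + j) := by
      calc (c - 1) * (m + j) + (m + j) = ((c - 1) + 1) * (m + j) := by ring
        _ = c * (m + j) := by rw [hKc]
    have h2 : c * ((m - d) + j) + c * d = c * (m + j) := by
      rw [← Nat.mul_add]
      congr 1
      omega
    omega
  have hprod := desc_prod_le (c - 1) c m (m - d) hpt (2 * n)
  have hnum := key_num n l c hn hl hc'
  have hDFpos : 0 < (m + 2 * n).descFactorial (2 * n) := by
    rcases Nat.eq_zero_or_pos ((m + 2 * n).descFactorial (2 * n)) with h | h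
    · exact absurd (Nat.descFactorial_eq_zero_iff_lt.mp h) (by omega)
    · exact h
  have hDF : (l - 1) * (m + 2 * n).descFactorial (2 * n) <
      l * (m - d + 2 * n).descFactorial (2 * n) := by
    have h1 : ((l - 1) * (m + 2 * n).descFactorial (2 * n)) * c ^ (2 * n)
        < (l * (m - d + 2 * n).descFactorial (2 * n)) * c ^ (2 * n) := by
      calc ((l - 1) * (m + 2 * n).descFactorial (2 * n)) * c ^ (2 * n)
          = ((l - 1) * c ^ (2 * n)) * (m + 2 * n).descFactorial (2 * n) := by ring
        _ < (l * (c - 1) ^ (2 * n)) * (m + 2 * n).descFactorial (2 * n) :=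
            Nat.mul_lt_mul_of_lt_of_le hnum (le_refl _) hDFpos
        _ = l * ((c - 1) ^ (2 * n) * (m + 2 * n).descFactorial (2 * n)) := by ring
        _ ≤ l * (c ^ (2 * n) * (m - d + 2 * n).descFactorial (2 * n)) :=
            Nat.mul_le_mul_left _ hprod
        _ = (l * (m - d + 2 * n).descFactorial (2 * n)) * c ^ (2 * n) := by ring
    exact Nat.lt_of_mul_lt_mul_right h1
  rw [Nat.descFactorial_eq_factorial_mul_choose, Nat.descFactorial_eq_factorial_mul_choose] at hDF
  have h2 : ((l - 1) * (m + 2 * n).choose (2 * n)) * (2 * n).factorial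
      < (l * (m - d + 2 * n).choose (2 * n)) * (2 * n).factorial := by
    calc ((l - 1) * (m + 2 * n).choose (2 * n)) * (2 * n).factorial
        = (l - 1) * ((2 * n).factorial * (m + 2 * n).choose (2 * n)) := by ring
      _ < l * ((2 * n).factorial * (m - d + 2 * n).choose (2 * n)) := hDF
      _ = (l * (m - d + 2 * n).choose (2 * n)) * (2 * n).factorial := by ring
  exact Nat.lt_of_mul_lt_mul_right h2
end
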